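/- Bridge-line criterion after a bridge outage: fix a bus ĵ ∈ N and a proportional control α, and let l ∈ E be a bridge of G whose removal splits G into two connected components G₁ (containing ĵ) and G₂. If no participating bus lies in G₂, then Σ_{k∈N} α_k D_{l,kĵ}(b) = 0 for every susceptance vector b ∈ (0,∞)^m; conversely, if some participating bus lies in G₂, then the set { b ∈ (0,∞)^m : Σ_{k∈N} α_k D_{l,kĵ}(b) = 0 } has m-dimensional Lebesgue measure zero. -/

import Mathlib

open Matrix MeasureTheory

variable {n m : ℕ}

/-- Incidence matrix of an oriented network with buses `Fin (n+1)` (bus `Fin.last n` is the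
reference bus) and oriented lines indexed by `Fin m` with endpoint maps `src`, `tgt`. -/
def incM (src tgt : Fin m → Fin (n+1)) : Matrix (Fin (n+1)) (Fin m) ℝ :=
  Matrix.of fun i l => if src l = i then 1 else if tgt l = i then -1 else 0

/-- The matrix `A` built from a Laplacian `L`: its top-left `n × n` block is the inverse of the
reduced Laplacian (obtained by deleting the last row and column) and all other entries are `0`. -/
noncomputable def AmatL (L : Matrix (Fin (n+1)) (Fin (n+1)) ℝ) : Matrix (Fin (n+1)) (Fin (n+1)) ℝ :=
  Matrix.of fun i j =>
    if h : i ≠ Fin.last n ∧ j ≠ Fin.last n then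
      (L.submatrix Fin.castSucc Fin.castSucc)⁻¹ (i.castPred h.1) (j.castPred h.2)
    else 0

/-- The matrix `A` of the network with susceptance vector `b`. -/
noncomputable def Amat (src tgt : Fin m → Fin (n+1)) (b : Fin m → ℝ) : Matrix (Fin (n+1)) (Fin (n+1)) ℝ :=
  AmatL (incM src tgt * Matrix.diagonal b * (incM src tgt)ᵀ)

/-- Power transfer distribution factor `D_{l, k ĵ}`. -/
noncomputable def ptdf (src tgt : Fin m → Fin (n+1)) (b : Fin m → ℝ) (l : Fin m) (k jh : Fin (n+1)) : ℝ :=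
  b l * (Amat src tgt b (src l) k + Amat src tgt b (tgt l) jh
       - Amat src tgt b (src l) jh - Amat src tgt b (tgt l) k)

/-- The underlying simple graph of the network. -/
def netGraph (src tgt : Fin m → Fin (n+1)) : SimpleGraph (Fin (n+1)) :=
  SimpleGraph.fromRel fun a c => ∃ l, src l = a ∧ tgt l = c

/-- There is a simple path in the network from `jh` to `k` that contains line `l`. -/
def PathThrough (src tgt : Fin m → Fin (n+1)) (jh k : Fin (n+1)) (l : Fin m) : Prop :=
  ∃ w : (netGraph src tgt).Walk jh k, w.IsPath ∧ s(src l, tgt l) ∈ w.edges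

/-- Lines `e₁` and `e₂` belong to the same block: they are equal or lie on a common simple cycle. -/
def sameBlock (src tgt : Fin m → Fin (n+1)) (e₁ e₂ : Fin m) : Prop :=
  e₁ = e₂ ∨ ∃ (v : Fin (n+1)) (c : (netGraph src tgt).Walk v v),
    c.IsCycle ∧ s(src e₁, tgt e₁) ∈ c.edges ∧ s(src e₂, tgt e₂) ∈ c.edges

/-- A cut vertex: a vertex whose removal disconnects the graph. -/
def IsCutVertex {V : Type*} (G : SimpleGraph V) (v : V) : Prop :=
  ¬ (G.induce {w : V | w ≠ v}).Connected

/-- The subgraph of the network with only the lines in `S`. -/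
def netGraphOn (src tgt : Fin m → Fin (n+1)) (S : Set (Fin m)) : SimpleGraph (Fin (n+1)) :=
  SimpleGraph.fromRel fun a c => ∃ l ∈ S, src l = a ∧ tgt l = c

def maskIn (F : Finset (Fin m)) (b : Fin m → ℝ) : Fin m → ℝ := fun l => if l ∈ F then b l else 0
def maskOut (F : Finset (Fin m)) (b : Fin m → ℝ) : Fin m → ℝ := fun l => if l ∈ F then 0 else b l

/-- Column submatrix `C_F` (columns outside `F` zeroed out). -/
def CFmat (src tgt : Fin m → Fin (n+1)) (F : Finset (Fin m)) : Matrix (Fin (n+1)) (Fin m) ℝ :=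
  Matrix.of fun i l => if l ∈ F then incM src tgt i l else 0

/-- Column submatrix `C_{−F}` (columns in `F` zeroed out). -/
def CmFmat (src tgt : Fin m → Fin (n+1)) (F : Finset (Fin m)) : Matrix (Fin (n+1)) (Fin m) ℝ :=
  Matrix.of fun i l => if l ∈ F then 0 else incM src tgt i l

/-- Diagonal susceptance matrix `B_F`. -/
def BFmat (b : Fin m → ℝ) (F : Finset (Fin m)) : Matrix (Fin m) (Fin m) ℝ :=
  Matrix.diagonal (maskIn F b)

/-- Diagonal susceptance matrix `B_{−F}`. -/
def BmFmat (b : Fin m → ℝ) (F : Finset (Fin m)) : Matrix (Fin m) (Fin m) ℝ :=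
  Matrix.diagonal (maskOut F b)

/-- The matrix `A_{−F}` of the post-contingency network `(N, E ∖ F)`. -/
noncomputable def AmFmat (src tgt : Fin m → Fin (n+1)) (b : Fin m → ℝ) (F : Finset (Fin m)) :
    Matrix (Fin (n+1)) (Fin (n+1)) ℝ :=
  AmatL (CmFmat src tgt F * BmFmat b F * (CmFmat src tgt F)ᵀ)

/-- The `k`-th standard unit vector of `ℝ^{n+1}`. -/
def evec (k : Fin (n+1)) : Fin (n+1) → ℝ := Pi.single k 1


/-! With `θ = A(b) (e_k - e_ĵ)`, the bus angles for one unit injected at `k` and withdrawn at `ĵ`,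
one has `L θ = e_k - e_ĵ` (`A` inverts `L` on vectors summing to zero), and `D_{l,kĵ}(b)` is the
flow `b_l (θ_i - θ_j)` on `l = (i, j)`. Pair `L θ` with the indicator `χ` of the component `G₂` of
`j` after removing `l`: since `χ` is constant across every other line, `χ ⬝ (L θ)` reduces to the
term of `l`, giving `D_{l,kĵ}(b) = -χ_k` for every positive `b`. Hence
`Σ_k α_k D_{l,kĵ}(b) = -Σ_{k ∈ G₂} α_k`: it vanishes identically when no participating bus lies
in `G₂`, and otherwise never vanishes, so its zero set is empty. -/

namespace PowerNetwork

section ReducedInverse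

variable (L : Matrix (Fin (n+1)) (Fin (n+1)) ℝ)

theorem AmatL_mulVec (p : Fin (n+1) → ℝ) :
    AmatL L *ᵥ p =
      Fin.snoc ((L.submatrix Fin.castSucc Fin.castSucc)⁻¹ *ᵥ fun u => p u.castSucc) 0 := by
  funext v
  induction v using Fin.lastCases with
  | last => simp [AmatL, mulVec, dotProduct]
  | cast u =>
    simp [AmatL, mulVec, dotProduct, Fin.sum_univ_castSucc, (Fin.castSucc_lt_last u).ne]

theorem mulVec_snoc_zero_castSucc (x : Fin n → ℝ) (u : Fin n) :
    (L *ᵥ Fin.snoc x 0) u.castSucc = (L.submatrix Fin.castSucc Fin.castSucc *ᵥ x) u := by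
  simp [mulVec, dotProduct, Fin.sum_univ_castSucc]

theorem mulVec_AmatL_mulVec (hL : IsUnit (L.submatrix Fin.castSucc Fin.castSucc).det)
    (hcol : 1 ᵥ* L = 0) (p : Fin (n+1) → ℝ) (hp : ∑ v, p v = 0) :
    L *ᵥ (AmatL L *ᵥ p) = p := by
  have hrows : ∀ u : Fin n, (L *ᵥ (AmatL L *ᵥ p)) u.castSucc = p u.castSucc := by
    intro u
    rw [AmatL_mulVec, mulVec_snoc_zero_castSucc, mulVec_mulVec, mul_nonsing_inv _ hL,
      one_mulVec]
  have htotal : ∑ v, (L *ᵥ (AmatL L *ᵥ p)) v = 0 := by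
    rw [← one_dotProduct, dotProduct_mulVec, hcol, zero_dotProduct]
  funext v
  induction v using Fin.lastCases with
  | last =>
    -- the reference row is forced: both vectors sum to zero and agree on the other rows
    rw [Fin.sum_univ_castSucc] at htotal hp
    simp only [hrows] at htotal
    linarith
  | cast u => exact hrows u

end ReducedInverse

variable (src tgt : Fin m → Fin (n+1))

def netLaplacian (b : Fin m → ℝ) : Matrix (Fin (n+1)) (Fin (n+1)) ℝ :=
  incM src tgt * diagonal b * (incM src tgt)ᵀ

/-- The component `G₂` of the head of `l` in the network without `l`. -/
def farComponent (l : Fin m) : Set (Fin (n+1)) :=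
  {v | (netGraphOn src tgt {e | e ≠ l}).Reachable v (tgt l)}

variable {src tgt}

theorem vecMul_incM (hsl : ∀ l, src l ≠ tgt l) (f : Fin (n+1) → ℝ) :
    f ᵥ* incM src tgt = fun e => f (src e) - f (tgt e) := by
  funext e
  rw [vecMul, dotProduct, Fintype.sum_eq_add (src e) (tgt e) (hsl e)]
  · simp [incM, hsl e]
    ring
  · rintro v ⟨hs, ht⟩
    simp [incM, Ne.symm hs, Ne.symm ht]

theorem dotProduct_netLaplacian_mulVec (hsl : ∀ l, src l ≠ tgt l) (b : Fin m → ℝ)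
    (f g : Fin (n+1) → ℝ) :
    f ⬝ᵥ (netLaplacian src tgt b *ᵥ g) =
      ∑ e, b e * (f (src e) - f (tgt e)) * (g (src e) - g (tgt e)) := by
  rw [netLaplacian, ← mulVec_mulVec, dotProduct_mulVec, ← vecMul_vecMul, mulVec_transpose,
    vecMul_incM hsl, vecMul_incM hsl]
  simp only [dotProduct, vecMul_diagonal]
  exact Finset.sum_congr rfl fun e _ => by ring

theorem one_vecMul_netLaplacian (hsl : ∀ l, src l ≠ tgt l) (b : Fin m → ℝ) :
    1 ᵥ* netLaplacian src tgt b = 0 := by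
  have hcol : (1 : Fin (n+1) → ℝ) ᵥ* incM src tgt = 0 := by
    rw [vecMul_incM hsl]
    simp only [Pi.one_apply, sub_self]
    rfl
  rw [netLaplacian, ← vecMul_vecMul, ← vecMul_vecMul, hcol, zero_vecMul, zero_vecMul]

theorem eq_of_netGraph_reachable {α : Type*} {f : Fin (n+1) → α}
    (hf : ∀ e, f (src e) = f (tgt e)) {u w : Fin (n+1)} (h : (netGraph src tgt).Reachable u w) :
    f u = f w := by
  obtain ⟨p⟩ := h
  induction p with
  | nil => rfl
  | cons hadj _ ih =>
    refine Eq.trans ?_ ih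
    obtain ⟨-, ⟨e, rfl, rfl⟩ | ⟨e, rfl, rfl⟩⟩ := (SimpleGraph.fromRel_adj _ _ _).mp hadj
    exacts [hf e, (hf e).symm]

theorem isUnit_det_reducedLaplacian (hsl : ∀ l, src l ≠ tgt l)
    (hconn : (netGraph src tgt).Connected) {b : Fin m → ℝ} (hb : ∀ e, 0 < b e) :
    IsUnit ((netLaplacian src tgt b).submatrix Fin.castSucc Fin.castSucc).det := by
  rw [isUnit_iff_ne_zero, Ne, ← exists_mulVec_eq_zero_iff]
  rintro ⟨x, hx0, hx⟩
  set y : Fin (n+1) → ℝ := Fin.snoc x 0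
  have henergy : ∑ e, b e * (y (src e) - y (tgt e)) * (y (src e) - y (tgt e)) = 0 := by
    rw [← dotProduct_netLaplacian_mulVec hsl, dotProduct, Fin.sum_univ_castSucc]
    simp [y, mulVec_snoc_zero_castSucc, hx]
  have hflat : ∀ e, y (src e) = y (tgt e) := by
    have hterm : ∀ e, 0 ≤ b e * (y (src e) - y (tgt e)) * (y (src e) - y (tgt e)) := fun e => by
      rw [mul_assoc]
      exact mul_nonneg (hb e).le (mul_self_nonneg _)
    intro e
    have h := (Finset.sum_eq_zero_iff_of_nonneg fun e _ => hterm e).mp henergy e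
      (Finset.mem_univ e)
    rw [mul_assoc, mul_eq_zero, mul_self_eq_zero, sub_eq_zero] at h
    exact h.resolve_left (hb e).ne'
  apply hx0
  funext u
  simpa [y] using eq_of_netGraph_reachable hflat (hconn.preconnected u.castSucc (Fin.last n))

theorem ptdf_eq_mul_sub (b : Fin m → ℝ) (l : Fin m) (k jh : Fin (n+1)) :
    ptdf src tgt b l k jh =
      b l * ((Amat src tgt b *ᵥ (evec k - evec jh)) (src l)
        - (Amat src tgt b *ᵥ (evec k - evec jh)) (tgt l)) := by
  simp only [ptdf, evec, mulVec_sub, mulVec_single_one, Pi.sub_apply, col_apply]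
  ring

theorem dotProduct_netLaplacian_mulVec_of_cut (hsl : ∀ l, src l ≠ tgt l) (b : Fin m → ℝ)
    {χ : Fin (n+1) → ℝ} (l : Fin m) (hχ : ∀ e, e ≠ l → χ (src e) = χ (tgt e))
    (g : Fin (n+1) → ℝ) :
    χ ⬝ᵥ (netLaplacian src tgt b *ᵥ g) =
      b l * (χ (src l) - χ (tgt l)) * (g (src l) - g (tgt l)) := by
  rw [dotProduct_netLaplacian_mulVec hsl, Fintype.sum_eq_single l]
  intro e he
  rw [hχ e he, sub_self, mul_zero, zero_mul]

theorem netGraphOn_adj (hsl : ∀ l, src l ≠ tgt l) {S : Set (Fin m)} {e : Fin m} (he : e ∈ S) :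
    (netGraphOn src tgt S).Adj (src e) (tgt e) :=
  (SimpleGraph.fromRel_adj _ _ _).mpr ⟨hsl e, Or.inl ⟨e, he, rfl, rfl⟩⟩

theorem indicator_farComponent_src_eq_tgt (hsl : ∀ l, src l ≠ tgt l) {l e : Fin m}
    (he : e ≠ l) :
    (farComponent src tgt l).indicator (1 : Fin (n+1) → ℝ) (src e) =
      (farComponent src tgt l).indicator 1 (tgt e) :=
  have hadj := netGraphOn_adj hsl (S := {e | e ≠ l}) he
  Set.indicator_eq_indicator ⟨hadj.symm.reachable.trans, hadj.reachable.trans⟩ rfl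

theorem ptdf_of_bridge (hsl : ∀ l, src l ≠ tgt l) (hconn : (netGraph src tgt).Connected)
    {jhat : Fin (n+1)} {l : Fin m}
    (hbridge : ¬ (netGraphOn src tgt {e | e ≠ l}).Reachable (src l) (tgt l))
    (hjhat : (netGraphOn src tgt {e | e ≠ l}).Reachable jhat (src l))
    {b : Fin m → ℝ} (hb : ∀ e, 0 < b e) (k : Fin (n+1)) :
    ptdf src tgt b l k jhat = -(farComponent src tgt l).indicator 1 k := by
  set χ : Fin (n+1) → ℝ := (farComponent src tgt l).indicator 1
  set θ := Amat src tgt b *ᵥ (evec k - evec jhat)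
  have hpotential : netLaplacian src tgt b *ᵥ θ = evec k - evec jhat :=
    mulVec_AmatL_mulVec _ (isUnit_det_reducedLaplacian hsl hconn hb)
      (one_vecMul_netLaplacian hsl b) _ (by simp [evec])
  have hflow := dotProduct_netLaplacian_mulVec_of_cut hsl b (χ := χ) l
    (fun e he => indicator_farComponent_src_eq_tgt hsl he) θ
  have hsrc : χ (src l) = 0 := Set.indicator_of_notMem (s := farComponent src tgt l) hbridge _
  have htgt : χ (tgt l) = 1 :=
    Set.indicator_of_mem (s := farComponent src tgt l) (SimpleGraph.Reachable.refl _) _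
  have hjhat' : χ jhat = 0 := Set.indicator_of_notMem (s := farComponent src tgt l)
    (fun h => hbridge (hjhat.symm.trans h)) _
  have hdemand : χ ⬝ᵥ (evec k - evec jhat) = χ k - χ jhat := by
    simp only [evec, dotProduct_sub, dotProduct_single, mul_one]
  rw [hpotential, hdemand, hsrc, htgt, hjhat'] at hflow
  rw [ptdf_eq_mul_sub]
  linarith

end PowerNetwork

theorem bridge_line_criterion_general
    {n m : ℕ} (src tgt : Fin m → Fin (n+1)) (hsl : ∀ l, src l ≠ tgt l)
    (hconn : (netGraph src tgt).Connected)
    (α : Fin (n+1) → ℝ) (hα0 : ∀ k, 0 ≤ α k)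
    (jhat : Fin (n+1)) (l : Fin m)
    (hbridge : ¬ (netGraphOn src tgt {e | e ≠ l}).Reachable (src l) (tgt l))
    (hjhat : (netGraphOn src tgt {e | e ≠ l}).Reachable jhat (src l)) :
    ((∀ k, 0 < α k → ¬ (netGraphOn src tgt {e | e ≠ l}).Reachable k (tgt l)) →
      ∀ b : Fin m → ℝ, (∀ e, 0 < b e) → ∑ k, α k * ptdf src tgt b l k jhat = 0)
    ∧ ((∃ k, 0 < α k ∧ (netGraphOn src tgt {e | e ≠ l}).Reachable k (tgt l)) →
      volume {b : Fin m → ℝ | (∀ e, 0 < b e) ∧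
        ∑ k, α k * ptdf src tgt b l k jhat = 0} = 0) := by
  set G₂ := PowerNetwork.farComponent src tgt l
  have hsum : ∀ b : Fin m → ℝ, (∀ e, 0 < b e) →
      ∑ k, α k * ptdf src tgt b l k jhat = -∑ k, α k * G₂.indicator 1 k := fun b hb => by
    simp only [PowerNetwork.ptdf_of_bridge hsl hconn hbridge hjhat hb, mul_neg,
      Finset.sum_neg_distrib, G₂]
  constructor
  · intro hnone b hb
    rw [hsum b hb, neg_eq_zero]
    refine Finset.sum_eq_zero fun k _ => ?_
    by_cases hk : k ∈ G₂
    · rw [(hα0 k).eq_of_not_lt (hnone k · hk) |>.symm, zero_mul]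
    · rw [Set.indicator_of_notMem hk, mul_zero]
  · rintro ⟨k, hαk, hk⟩
    suffices h : {b : Fin m → ℝ | (∀ e, 0 < b e) ∧ ∑ k, α k * ptdf src tgt b l k jhat = 0} = ∅ by
      rw [h, measure_empty]
    refine Set.eq_empty_of_forall_notMem fun b ⟨hb, hzero⟩ => ?_
    have hpos : 0 < ∑ k, α k * G₂.indicator 1 k :=
      Finset.sum_pos' (fun i _ => mul_nonneg (hα0 i) (Set.indicator_nonneg (by simp) i))
        ⟨k, Finset.mem_univ k, by rwa [Set.indicator_of_mem (s := G₂) hk, Pi.one_apply, mul_one]⟩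
    linarith [hsum b hb]

/-- bridge-line criterion after a bridge outage. Let `l ∈ E` be a bridge of
the connected network whose removal splits it into the component `G₁` of `src l` (containing
`jhat`) and the component `G₂` of `tgt l`. If no participating bus lies in `G₂`, then
`∑_k α_k D_{l,kĵ}(b) = 0` for every positive susceptance vector `b`; conversely, if some
participating bus lies in `G₂`, then the set of positive susceptance vectors with
`∑_k α_k D_{l,kĵ}(b) = 0` has `m`-dimensional Lebesgue measure zero. -/
theorem bridge_line_criterion
    {n m : ℕ} (src tgt : Fin m → Fin (n+1)) (hsl : ∀ l, src l ≠ tgt l)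
    (hconn : (netGraph src tgt).Connected)
    (α : Fin (n+1) → ℝ) (hα0 : ∀ k, 0 ≤ α k) (hα1 : ∑ k, α k = 1)
    (jhat : Fin (n+1)) (l : Fin m)
    (hbridge : ¬ (netGraphOn src tgt {e | e ≠ l}).Reachable (src l) (tgt l))
    (hjhat : (netGraphOn src tgt {e | e ≠ l}).Reachable jhat (src l)) :
    ((∀ k, 0 < α k → ¬ (netGraphOn src tgt {e | e ≠ l}).Reachable k (tgt l)) →
      ∀ b : Fin m → ℝ, (∀ e, 0 < b e) → ∑ k, α k * ptdf src tgt b l k jhat = 0)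
    ∧ ((∃ k, 0 < α k ∧ (netGraphOn src tgt {e | e ≠ l}).Reachable k (tgt l)) →
      volume {b : Fin m → ℝ | (∀ e, 0 < b e) ∧
        ∑ k, α k * ptdf src tgt b l k jhat = 0} = 0) :=
  bridge_line_criterion_general src tgt hsl hconn α hα0 jhat l hbridge hjhat
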